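/- Under the hypotheses (i)–(vi) of the inverse-sequence setup (data n_i, P_i ⊂ I^{n_i}, δ_i, ε_i, g_i^{i+1} : P_{i+1} → P_i, with X = ∩_{i=1}^∞ P_i × Q_{n_i}, Z = lim (P_i, g_i^{i+1}), and π : Z → X the limit map π(z) = lim_{i→∞} a_i for a thread z = (a_i)), fix x ∈ X, let B_{x,i} = N̄(p_{n_i}(x), 2δ_i) ∩ P_i and B^#_{x,i} = N̄(p_{n_i}(x), ε_i) ∩ P_i, and set P_x = (B_{x,i}, g_i^{i+1}) and P_x^# = (B^#_{x,i}, g_i^{i+1}). Then (d) lim P_x = lim P_x^#, and (e) π^{-1}(x) = lim P_x. -/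

import Mathlib

open Set Topology Filter

noncomputable section

/-! ### The Hilbert cube `Q = ∏_{i=1}^∞ I` realized inside `ℕ → ℝ` -/

/-- The ambient space `ℝ^∞` containing the Hilbert cube. -/
abbrev ESp : Type := ℕ → ℝ

/-- The metric `ρ(x, y) = ∑_{i=1}^∞ |x_i - y_i| / 2^i` on the Hilbert cube. -/
noncomputable def rho (x y : ESp) : ℝ := ∑' i : ℕ, |x i - y i| / 2 ^ (i + 1)

/-- The coordinate projection `p_n : Q → I^n` (followed by the identification of
`I^n` with the slice `I^n × {0} ⊆ Q`). -/
def proj (n : ℕ) (x : ESp) : ESp := fun j => if j < n then x j else 0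

/-- The Hilbert cube `Q`. -/
def HCube : Set ESp := {x | ∀ i, x i ∈ Set.Icc (0 : ℝ) 1}

/-- The slice `I^n × {0} ⊆ Q`, the canonical copy of `I^n` in `Q`. -/
def cubeSlice (n : ℕ) : Set ESp := {x ∈ HCube | ∀ j, n ≤ j → x j = 0}

/-- `P × Q_n ⊆ Q = I^n × Q_n`, for a subset `P` of the slice `I^n × {0}`. -/
def tube (P : Set ESp) (n : ℕ) : Set ESp := {x ∈ HCube | proj n x ∈ P}

/-- The data and hypotheses (i)–(vi) of the inverse-sequence setup of Lemma 3.1. -/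
structure InvSeqSetup where
  n : ℕ → ℕ
  P : ℕ → Set ESp
  δ : ℕ → ℝ
  ε : ℕ → ℝ
  /-- the bonding maps `g_i^{i+1} : P_{i+1} → P_i` -/
  g : ℕ → ESp → ESp
  P_sub : ∀ i, P i ⊆ cubeSlice (n i)
  P_cpt : ∀ i, IsCompact (P i)
  δ_pos : ∀ i, 0 < δ i
  ε_pos : ∀ i, 0 < ε i
  g_maps : ∀ i, Set.MapsTo (g i) (P (i + 1)) (P i)
  g_cont : ∀ i, ContinuousOn (g i) (P (i + 1))
  /-- (i) -/
  hyp1 : ∀ i, ∀ u ∈ HCube, ∀ v ∈ HCube,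
    rho u v ≤ ε (i + 1) → rho (proj (n i) u) (proj (n i) v) < δ i
  /-- (ii) -/
  hyp2 : ∀ i, n i < n (i + 1)
  /-- (iii) -/
  hyp3 : ∀ i, 9 / 2 ^ n i < ε i
  /-- (iv) -/
  hyp4 : ∀ i, ∀ x ∈ P (i + 1), rho (g i x) (proj (n i) x) < δ i
  /-- (v) -/
  hyp5 : ∀ i, δ i < 1 / 2 ^ (n i - 1)
  /-- (vi) -/
  hyp6 : ∀ i, tube (P (i + 1)) (n (i + 1)) ⊆ tube (P i) (n i)

namespace InvSeqSetup

/-- `X = ∩_{i=1}^∞ P_i × Q_{n_i}`. -/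
def X (S : InvSeqSetup) : Set ESp := ⋂ i, tube (S.P i) (S.n i)

/-- `Z = lim (P_i, g_i^{i+1})`: the space of threads of the inverse sequence. -/
abbrev Thread (S : InvSeqSetup) : Type :=
  {a : ℕ → ESp // (∀ i, a i ∈ S.P i) ∧ ∀ i, S.g i (a (i + 1)) = a i}

/-- `π : Z → X` is the limit map, `π(z) = lim_{i→∞} a_i` for a thread `z = (a_i)`. -/
def IsLimitMap (S : InvSeqSetup) (π : S.Thread → ESp) : Prop :=
  ∀ z : S.Thread, Filter.Tendsto (fun i => rho (z.1 i) (π z)) Filter.atTop (nhds 0)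

/-- `B_{x,i} = N̄(p_{n_i}(x), 2δ_i) ∩ P_i`. -/
def B (S : InvSeqSetup) (x : ESp) (i : ℕ) : Set ESp :=
  {y ∈ cubeSlice (S.n i) | rho y (proj (S.n i) x) ≤ 2 * S.δ i} ∩ S.P i

/-- `B^#_{x,i} = N̄(p_{n_i}(x), ε_i) ∩ P_i`. -/
def Bs (S : InvSeqSetup) (x : ESp) (i : ℕ) : Set ESp :=
  {y ∈ cubeSlice (S.n i) | rho y (proj (S.n i) x) ≤ S.ε i} ∩ S.P i

end InvSeqSetup

end

/-!
Along a thread `(a_i)`, hypothesis (iv) makes `a_i` and `p_{n_i}(a_{i+1})` `δ_i`-close; since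
`δ_i ≤ 2 / 2^{n_i}` and the `n_i` increase strictly, these errors telescope to
`ρ(a_j, p_{n_j}(a_J)) ≤ 4 / 2^{n_j}`. Hypothesis (i) turns `ε_{i+1}`-closeness of `a_{i+1}` to `x`
into `δ_i`-closeness of the projections to level `n_i`: this gives `B^#_{x,i+1} → B_{x,i}` along
threads, and, with the telescoping bound, that a thread converging to `x` lies in `lim P_x^#`.
Conversely a thread of `P_x` is within `2δ_i + 2^{-n_i}` of `x`, hence converges to `x`, and
limits in `Q` are unique.
-/

lemma abs_sub_le_one_of_mem_HCube {u v : ESp} (hu : u ∈ HCube) (hv : v ∈ HCube) (i : ℕ) :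
    |u i - v i| ≤ 1 := by
  rw [abs_sub_le_iff]
  constructor <;> linarith [(hu i).1, (hu i).2, (hv i).1, (hv i).2]

lemma summable_rho {u v : ESp} (hu : u ∈ HCube) (hv : v ∈ HCube) :
    Summable fun i : ℕ => |u i - v i| / 2 ^ (i + 1) := by
  refine (summable_geometric_two' 1).of_nonneg_of_le (fun i => by positivity) fun i => ?_
  calc |u i - v i| / 2 ^ (i + 1) ≤ 1 / 2 ^ (i + 1) := by
        gcongr; exact abs_sub_le_one_of_mem_HCube hu hv i
    _ = 1 / 2 / 2 ^ i := by rw [pow_succ]; ring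

lemma rho_nonneg (u v : ESp) : 0 ≤ rho u v :=
  tsum_nonneg fun i => by positivity

lemma rho_self (u : ESp) : rho u u = 0 := by simp [rho]

lemma rho_comm (u v : ESp) : rho u v = rho v u := by
  simp only [rho, abs_sub_comm]

lemma rho_triangle {u v w : ESp} (hu : u ∈ HCube) (hv : v ∈ HCube) (hw : w ∈ HCube) :
    rho u w ≤ rho u v + rho v w := by
  rw [rho, rho, rho, ← (summable_rho hu hv).tsum_add (summable_rho hv hw)]
  refine (summable_rho hu hw).tsum_le_tsum (fun i => ?_)
    ((summable_rho hu hv).add (summable_rho hv hw))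
  rw [← add_div]
  gcongr
  exact abs_sub_le (u i) (v i) (w i)

lemma eq_of_rho_eq_zero {u v : ESp} (hu : u ∈ HCube) (hv : v ∈ HCube) (h : rho u v = 0) :
    u = v := by
  funext i
  have hterm : |u i - v i| / 2 ^ (i + 1) = 0 :=
    le_antisymm (h ▸ (summable_rho hu hv).le_tsum i fun j _ => by positivity) (by positivity)
  simpa [sub_eq_zero] using hterm

lemma eq_of_tendsto_rho {ι : Type*} {l : Filter ι} [l.NeBot] {a : ι → ESp} {x y : ESp}
    (ha : ∀ i, a i ∈ HCube) (hx : x ∈ HCube) (hy : y ∈ HCube)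
    (hax : Tendsto (fun i => rho (a i) x) l (𝓝 0)) (hay : Tendsto (fun i => rho (a i) y) l (𝓝 0)) :
    x = y := by
  refine eq_of_rho_eq_zero hx hy (le_antisymm ?_ (rho_nonneg x y))
  refine ge_of_tendsto (by simpa using hax.add hay) (Eventually.of_forall fun i => ?_)
  calc rho x y ≤ rho x (a i) + rho (a i) y := rho_triangle hx (ha i) hy
    _ = rho (a i) x + rho (a i) y := by rw [rho_comm x]

lemma proj_mem_HCube {u : ESp} (hu : u ∈ HCube) (n : ℕ) : proj n u ∈ HCube := by
  intro i
  unfold proj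
  split
  · exact hu i
  · exact ⟨le_rfl, zero_le_one⟩

lemma proj_eq_self_of_mem_cubeSlice {u : ESp} {n : ℕ} (hu : u ∈ cubeSlice n) :
    proj n u = u := by
  funext j
  by_cases hj : j < n
  · simp [proj, hj]
  · simp [proj, hj, hu.2 j (not_lt.mp hj)]

lemma proj_proj {m n : ℕ} (h : m ≤ n) (u : ESp) : proj m (proj n u) = proj m u := by
  funext j
  by_cases hj : j < m
  · simp [proj, hj, hj.trans_le h]
  · simp [proj, hj]

lemma rho_proj_proj_le {u v : ESp} (hu : u ∈ HCube) (hv : v ∈ HCube) (n : ℕ) :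
    rho (proj n u) (proj n v) ≤ rho u v := by
  refine (summable_rho (proj_mem_HCube hu n) (proj_mem_HCube hv n)).tsum_le_tsum (fun i => ?_)
    (summable_rho hu hv)
  by_cases hi : i < n
  · simp [proj, hi]
  · simp only [proj, hi, if_false, sub_self, abs_zero, zero_div]
    positivity

lemma rho_proj_self_le {u : ESp} (hu : u ∈ HCube) (n : ℕ) : rho (proj n u) u ≤ 1 / 2 ^ n := by
  have hs := summable_rho (proj_mem_HCube hu n) hu
  rw [rho, ← hs.sum_add_tsum_nat_add n,
    Finset.sum_eq_zero fun i hi => by simp [proj, Finset.mem_range.mp hi], zero_add,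
    ← tsum_geometric_two' (1 / 2 ^ n)]
  refine ((summable_nat_add_iff n).2 hs).tsum_le_tsum (fun i => ?_) (summable_geometric_two' _)
  calc |proj n u (i + n) - u (i + n)| / 2 ^ (i + n + 1) ≤ 1 / 2 ^ (i + n + 1) := by
        gcongr; exact abs_sub_le_one_of_mem_HCube (proj_mem_HCube hu n) hu _
    _ = 1 / 2 ^ n / 2 / 2 ^ i := by rw [pow_succ, pow_add]; field_simp

lemma one_div_two_pow_pred_le_two_div_two_pow (n : ℕ) : (1 : ℝ) / 2 ^ (n - 1) ≤ 2 / 2 ^ n := by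
  cases n with
  | zero => norm_num
  | succ n => rw [Nat.add_sub_cancel, pow_succ]; field_simp; norm_num

namespace InvSeqSetup

variable (S : InvSeqSetup)

lemma n_strictMono : StrictMono S.n := strictMono_nat_of_lt_succ S.hyp2

lemma mem_HCube_of_mem_P {i : ℕ} {y : ESp} (hy : y ∈ S.P i) : y ∈ HCube := (S.P_sub i hy).1

lemma δ_le (i : ℕ) : S.δ i ≤ 2 / 2 ^ S.n i :=
  (S.hyp5 i).le.trans (one_div_two_pow_pred_le_two_div_two_pow _)

lemma δ_add_four_div_le (i : ℕ) : S.δ i + 4 / 2 ^ S.n (i + 1) ≤ 4 / 2 ^ S.n i := by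
  have hpow : (4 : ℝ) / 2 ^ S.n (i + 1) ≤ 2 / 2 ^ S.n i := by
    rw [div_le_div_iff₀ (by positivity) (by positivity)]
    calc (4 : ℝ) * 2 ^ S.n i = 2 * 2 ^ (S.n i + 1) := by ring
      _ ≤ 2 * 2 ^ S.n (i + 1) := by gcongr; exacts [one_le_two, S.hyp2 i]
  have h4 : (4 : ℝ) / 2 ^ S.n i = 2 / 2 ^ S.n i + 2 / 2 ^ S.n i := by ring
  linarith [S.δ_le i]

lemma B_subset_Bs (x : ESp) (i : ℕ) : S.B x i ⊆ S.Bs x i := by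
  rintro y ⟨⟨hy, hyx⟩, hyP⟩
  refine ⟨⟨hy, hyx.trans ?_⟩, hyP⟩
  calc 2 * S.δ i ≤ 2 * (2 / 2 ^ S.n i) := by gcongr; exact S.δ_le i
    _ = 4 / 2 ^ S.n i := by ring
    _ ≤ 9 / 2 ^ S.n i := by gcongr; norm_num
    _ ≤ S.ε i := (S.hyp3 i).le

lemma rho_thread_lt_δ (z : S.Thread) (i : ℕ) :
    rho (z.1 i) (proj (S.n i) (z.1 (i + 1))) < S.δ i := by
  simpa [z.2.2 i] using S.hyp4 i _ (z.2.1 (i + 1))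

lemma thread_mem_B_of_mem_Bs_succ (z : S.Thread) {x : ESp} (hx : x ∈ HCube) {i : ℕ}
    (h : z.1 (i + 1) ∈ S.Bs x (i + 1)) : z.1 i ∈ S.B x i := by
  have hz := S.mem_HCube_of_mem_P (z.2.1 (i + 1))
  have hproj : rho (proj (S.n i) (z.1 (i + 1))) (proj (S.n i) x) < S.δ i := by
    simpa [proj_proj (S.n_strictMono.monotone i.le_succ)] using
      S.hyp1 i _ hz _ (proj_mem_HCube hx _) h.1.2
  refine ⟨⟨S.P_sub i (z.2.1 i), ?_⟩, z.2.1 i⟩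
  linarith [S.rho_thread_lt_δ z i, rho_triangle (S.mem_HCube_of_mem_P (z.2.1 i))
    (proj_mem_HCube hz (S.n i)) (proj_mem_HCube hx (S.n i))]

lemma setOf_thread_mem_B_eq {x : ESp} (hx : x ∈ HCube) :
    {z : S.Thread | ∀ i, z.1 i ∈ S.B x i} = {z : S.Thread | ∀ i, z.1 i ∈ S.Bs x i} :=
  Set.ext fun z => ⟨fun h i => S.B_subset_Bs x i (h i),
    fun h i => S.thread_mem_B_of_mem_Bs_succ z hx (h (i + 1))⟩

lemma rho_thread_proj_le (z : S.Thread) {j J : ℕ} (hjJ : j ≤ J) :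
    rho (z.1 j) (proj (S.n j) (z.1 J)) ≤ 4 / 2 ^ S.n j - 4 / 2 ^ S.n J := by
  induction J, hjJ using Nat.le_induction with
  | base => simp [proj_eq_self_of_mem_cubeSlice (S.P_sub j (z.2.1 j)), rho_self]
  | succ J hjJ ih =>
    have hJ := S.mem_HCube_of_mem_P (z.2.1 J)
    have hJ1 := S.mem_HCube_of_mem_P (z.2.1 (J + 1))
    have hstep : rho (proj (S.n j) (z.1 J)) (proj (S.n j) (z.1 (J + 1))) ≤ S.δ J := by
      have h := rho_proj_proj_le hJ (proj_mem_HCube hJ1 (S.n J)) (S.n j)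
      rw [proj_proj (S.n_strictMono.monotone hjJ)] at h
      exact h.trans (S.rho_thread_lt_δ z J).le
    linarith [S.δ_add_four_div_le J, rho_triangle (S.mem_HCube_of_mem_P (z.2.1 j))
      (proj_mem_HCube hJ (S.n j)) (proj_mem_HCube hJ1 (S.n j))]

lemma thread_mem_Bs_of_tendsto (z : S.Thread) {x : ESp} (hx : x ∈ HCube)
    (hzx : Tendsto (fun i => rho (z.1 i) x) atTop (𝓝 0)) (j : ℕ) : z.1 j ∈ S.Bs x j := by
  obtain ⟨J, hJx, hjJ⟩ :=
    ((hzx.eventually (gt_mem_nhds (S.ε_pos (j + 1)))).and (eventually_ge_atTop j)).exists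
  have hJ := S.mem_HCube_of_mem_P (z.2.1 J)
  have hproj := S.hyp1 j _ hJ x hx hJx.le
  have h6 : (4 : ℝ) / 2 ^ S.n j + 2 / 2 ^ S.n j ≤ 9 / 2 ^ S.n j := by
    rw [← add_div]; gcongr; norm_num
  have h4 : (0 : ℝ) < 4 / 2 ^ S.n J := by positivity
  refine ⟨⟨S.P_sub j (z.2.1 j), ?_⟩, z.2.1 j⟩
  linarith [S.rho_thread_proj_le z hjJ, S.δ_le j, S.hyp3 j, rho_triangle
    (S.mem_HCube_of_mem_P (z.2.1 j)) (proj_mem_HCube hJ (S.n j)) (proj_mem_HCube hx (S.n j))]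

lemma tendsto_rho_thread_of_mem_B (z : S.Thread) {x : ESp} (hx : x ∈ HCube)
    (hz : ∀ i, z.1 i ∈ S.B x i) : Tendsto (fun i => rho (z.1 i) x) atTop (𝓝 0) := by
  have hbound : ∀ i, rho (z.1 i) x ≤ 5 / 2 ^ S.n i := fun i => by
    have h := rho_triangle (S.mem_HCube_of_mem_P (z.2.1 i)) (proj_mem_HCube hx (S.n i)) hx
    have h5 : (5 : ℝ) / 2 ^ S.n i = 2 * (2 / 2 ^ S.n i) + 1 / 2 ^ S.n i := by ring
    linarith [(hz i).1.2, S.δ_le i, rho_proj_self_le hx (S.n i)]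
  have hlim : Tendsto (fun i => (5 : ℝ) / 2 ^ S.n i) atTop (𝓝 0) :=
    tendsto_const_nhds.div_atTop
      ((tendsto_pow_atTop_atTop_of_one_lt one_lt_two).comp S.n_strictMono.tendsto_atTop)
  exact squeeze_zero (fun i => rho_nonneg _ _) hbound hlim

end InvSeqSetup

theorem statement4_general (S : InvSeqSetup) (π : S.Thread → ESp) (hπ : S.IsLimitMap π)
    (hπX : ∀ z : S.Thread, π z ∈ S.X)
    (x : ESp) (hx : x ∈ S.X) :
    {z : S.Thread | ∀ i, z.1 i ∈ S.B x i} = {z : S.Thread | ∀ i, z.1 i ∈ S.Bs x i} ∧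
    {z : S.Thread | π z = x} = {z : S.Thread | ∀ i, z.1 i ∈ S.B x i} := by
  have hxQ : x ∈ HCube := (mem_iInter.mp hx 0).1
  have hd := S.setOf_thread_mem_B_eq hxQ
  refine ⟨hd, Set.ext fun z => ⟨fun hz => ?_, fun hz => ?_⟩⟩
  · rw [hd]
    exact S.thread_mem_Bs_of_tendsto z hxQ (hz ▸ hπ z)
  · exact eq_of_tendsto_rho (fun i => S.mem_HCube_of_mem_P (z.2.1 i))
      (mem_iInter.mp (hπX z) 0).1 hxQ (hπ z) (S.tendsto_rho_thread_of_mem_B z hxQ hz)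

/-- Lemma 3.1 (d), (e): for `x ∈ X`,
`lim P_x = lim P_x^#` and `π⁻¹(x) = lim P_x`, where `P_x = (B_{x,i}, g_i^{i+1})` and
`P_x^# = (B^#_{x,i}, g_i^{i+1})` are the induced inverse sequences. -/
theorem statement4 (S : InvSeqSetup) (π : S.Thread → ESp) (hπ : S.IsLimitMap π)
    (hπX : ∀ z : S.Thread, π z ∈ S.X) (hπc : Continuous π)
    (x : ESp) (hx : x ∈ S.X) :
    {z : S.Thread | ∀ i, z.1 i ∈ S.B x i} = {z : S.Thread | ∀ i, z.1 i ∈ S.Bs x i} ∧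
    {z : S.Thread | π z = x} = {z : S.Thread | ∀ i, z.1 i ∈ S.B x i} :=
  statement4_general S π hπ hπX x hx
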